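/- Let n ≥ 4, let C be the (n−1)×(n−1) circulant matrix circ(1,0,…,0,−1), let N = [[𝟏ᵀ, 0ᵀ],[−I_{n−1}, C]], X = (CCᵀ + I_{n−1})⁻¹(J_{n−1} − n·I_{n−1}), Y = −CᵀX, and H = (1/n) · [[𝟏, X],[0, Y]]. Then N H = I_n − (1/n)·J_n. -/

import Mathlib

/-!
Every column of `C` sums to zero, so `𝟏ᵀ (C Cᵀ + I) = 𝟏ᵀ`, hence `𝟏ᵀ (C Cᵀ + I)⁻¹ = 𝟏ᵀ` and every
column of `X` sums to `(n - 1) - n = -1`. Moreover `-X + C Y = -(C Cᵀ + I) X = n I - J`.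
Multiplying blockwise, `N H = (1/n) [[n - 1, -𝟏ᵀ], [-𝟏, n I - J]]`, which is `I - J/n`.
-/

open Matrix

noncomputable section

/-- The circulant matrix of order `m` with defining vector `v`:
its `(i,j)` entry is `v ((j - i) mod m)`. -/
def circ {m : ℕ} (v : Fin m → ℝ) : Matrix (Fin m) (Fin m) ℝ :=
  Matrix.of fun i j => v (j - i)

/-- The `m × m` all-ones matrix. -/
def Jmat (m : ℕ) : Matrix (Fin m) (Fin m) ℝ := Matrix.of fun _ _ => 1

lemma allOnes_mul_circ {ι : Type*} {m : ℕ} [NeZero m] (v : Fin m → ℝ) :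
    (of fun _ _ => 1 : Matrix ι (Fin m) ℝ) * circ v = of fun _ _ => ∑ k, v k := by
  ext i j
  simp only [mul_apply, of_apply, one_mul, circ]
  exact Fintype.sum_equiv (Equiv.subLeft j) _ _ fun _ => rfl

lemma sum_ite_val_zero_ite_val_last {n : ℕ} (hn : 3 ≤ n) :
    ∑ k : Fin (n - 1), (if k.val = 0 then (1 : ℝ) else if k.val = n - 2 then -1 else 0) = 0 := by
  rw [Fintype.sum_eq_add (⟨0, by omega⟩ : Fin (n - 1)) ⟨n - 2, by omega⟩
    (by simp [Fin.ext_iff]; omega)]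
  · simp [show n - 2 ≠ 0 by omega]
  · rintro k ⟨h0, hlast⟩
    simp only [ne_eq, Fin.ext_iff] at h0 hlast
    simp [h0, hlast]

lemma isUnit_det_mul_transpose_add_one {m : Type*} [Fintype m] [DecidableEq m]
    (C : Matrix m m ℝ) : IsUnit (C * Cᵀ + 1).det := by
  have hCCt : (C * Cᵀ).PosSemidef := by
    simpa only [conjTranspose_eq_transpose_of_trivial] using posSemidef_self_mul_conjTranspose C
  exact (PosDef.posSemidef_add hCCt PosDef.one).det_pos.ne'.isUnit

lemma mul_nonsing_inv_eq_self {l m α : Type*} [Fintype m] [DecidableEq m] [CommRing α]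
    {U : Matrix l m α} {A : Matrix m m α} (hA : IsUnit A.det) (h : U * A = U) :
    U * A⁻¹ = U := by
  conv_lhs => rw [← h]
  exact mul_nonsing_inv_cancel_right A U hA

lemma allOnes_mul_Jmat_sub_smul_one {ι : Type*} {m : ℕ} (c : ℝ) :
    (of fun _ _ => 1 : Matrix ι (Fin m) ℝ) * (Jmat m - c • 1) =
      ((m : ℝ) - c) • of fun _ _ => 1 := by
  ext i j
  simp [mul_apply, Jmat, Matrix.sub_apply, one_apply]

lemma allOnes_mul_inv_mul_transpose_add_one_mul {ι : Type*} {m : ℕ} {C : Matrix (Fin m) (Fin m) ℝ}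
    (hC : (of fun _ _ => 1 : Matrix ι (Fin m) ℝ) * C = 0) (c : ℝ) :
    (of fun _ _ => 1 : Matrix ι (Fin m) ℝ) * ((C * Cᵀ + 1)⁻¹ * (Jmat m - c • 1)) =
      ((m : ℝ) - c) • of fun _ _ => 1 := by
  have hA : (of fun _ _ => 1 : Matrix ι (Fin m) ℝ) * (C * Cᵀ + 1) = of fun _ _ => 1 := by
    rw [Matrix.mul_add, ← Matrix.mul_assoc, hC, Matrix.zero_mul, zero_add, Matrix.mul_one]
  rw [← Matrix.mul_assoc, mul_nonsing_inv_eq_self (isUnit_det_mul_transpose_add_one C) hA,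
    allOnes_mul_Jmat_sub_smul_one]

lemma neg_add_mul_neg_transpose_mul_inv_mul {m : Type*} [Fintype m] [DecidableEq m]
    (C B : Matrix m m ℝ) :
    -((C * Cᵀ + 1)⁻¹ * B) + C * -(Cᵀ * ((C * Cᵀ + 1)⁻¹ * B)) = -B := by
  calc -((C * Cᵀ + 1)⁻¹ * B) + C * -(Cᵀ * ((C * Cᵀ + 1)⁻¹ * B))
      = -((C * Cᵀ + 1) * (C * Cᵀ + 1)⁻¹ * B) := by
        simp only [Matrix.mul_neg, Matrix.add_mul, Matrix.one_mul, Matrix.mul_assoc]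
        abel
    _ = -B := by rw [mul_nonsing_inv _ (isUnit_det_mul_transpose_add_one C), Matrix.one_mul]

lemma one_sub_smul_allOnes_eq_smul_fromBlocks {n : ℕ} (hn : 1 ≤ n) :
    (1 : Matrix (Fin 1 ⊕ Fin (n - 1)) (Fin 1 ⊕ Fin (n - 1)) ℝ) - (1 / (n : ℝ)) • (of fun _ _ => 1) =
      (1 / (n : ℝ)) • fromBlocks (of fun _ _ => (n : ℝ) - 1 : Matrix (Fin 1) (Fin 1) ℝ) (-of fun _ _ => 1)
        (-of fun _ _ => 1) ((n : ℝ) • 1 - Jmat (n - 1)) := by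
  have hn0 : (n : ℝ) ≠ 0 := by positivity
  ext (i | i) (j | j)
  · simp only [Matrix.sub_apply, Matrix.smul_apply, Subsingleton.elim i j, one_apply_eq,
      of_apply, fromBlocks_apply₁₁, smul_eq_mul]
    field_simp
  · simp
  · simp
  · simp only [Matrix.sub_apply, Matrix.smul_apply, one_apply, Sum.inr.injEq, fromBlocks_apply₂₂,
      Jmat, of_apply, smul_eq_mul]
    split_ifs <;> field_simp

theorem wheel_oriented_NH (n : ℕ) (hn : 4 ≤ n)
    (C X Y : Matrix (Fin (n-1)) (Fin (n-1)) ℝ)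
    (hC : C = circ (fun k => if k.val = 0 then (1:ℝ) else if k.val = n - 2 then -1 else 0))
    (hX : X = (C * Cᵀ + 1)⁻¹ * (Jmat (n-1) - (n:ℝ) • (1 : Matrix (Fin (n-1)) (Fin (n-1)) ℝ)))
    (hY : Y = -(Cᵀ * X))
    (N : Matrix (Fin 1 ⊕ Fin (n-1)) (Fin (n-1) ⊕ Fin (n-1)) ℝ)
    (hN : N = Matrix.fromBlocks (Matrix.of fun _ _ => 1) 0 (-1) C)
    (H : Matrix (Fin (n-1) ⊕ Fin (n-1)) (Fin 1 ⊕ Fin (n-1)) ℝ)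
    (hH : H = (1 / (n:ℝ)) •
      Matrix.fromBlocks (Matrix.of fun _ _ => 1) X 0 Y) :
    N * H = 1 - (1 / (n:ℝ)) • (Matrix.of fun _ _ => 1 :
      Matrix (Fin 1 ⊕ Fin (n-1)) (Fin 1 ⊕ Fin (n-1)) ℝ) := by
  have : NeZero (n - 1) := ⟨by omega⟩
  have hC0 : (of fun _ _ => 1 : Matrix (Fin 1) (Fin (n - 1)) ℝ) * C = 0 := by
    rw [hC, allOnes_mul_circ, sum_ite_val_zero_ite_val_last (by omega)]
    rfl
  subst hN hH hY hX
  rw [Matrix.mul_smul, fromBlocks_multiply, one_sub_smul_allOnes_eq_smul_fromBlocks (by omega),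
    fromBlocks_inj.mpr ⟨?_, ?_, ?_, ?_⟩]
  · ext
    simp [mul_apply, Nat.cast_pred (by omega : 0 < n)]
  · rw [Matrix.zero_mul, add_zero, allOnes_mul_inv_mul_transpose_add_one_mul hC0,
      Nat.cast_pred (by omega), sub_sub_cancel_left, neg_one_smul]
  · rw [Matrix.mul_zero, add_zero, Matrix.neg_mul, Matrix.one_mul]
  · rw [Matrix.neg_mul, Matrix.one_mul, neg_add_mul_neg_transpose_mul_inv_mul, neg_sub]
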